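/- Restricted to nonempty patterns of positive conjunctive support, f_bond satisfies the three closure-operator axioms: (extensivity) X ⊆ f_bond(X) for every X ⊆ ℐ; (isotonie) if X ⊆ X' ⊆ ℐ with X nonempty and Supp(∧X') > 0, then f_bond(X) ⊆ f_bond(X'); (idempotence) if X ⊆ ℐ is nonempty with Supp(∧X) > 0, then f_bond(f_bond(X)) = f_bond(X). -/

import Mathlib

open Finset

variable {τ ι : Type*} [DecidableEq ι]

/-- Conjunctive support: number of transactions containing the whole pattern. -/
def suppConj (T : Finset τ) (items : τ → Finset ι) (X : Finset ι) : ℕ :=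
  (T.filter fun t => X ⊆ items t).card

/-- Disjunctive support: number of transactions containing at least one item of the pattern. -/
def suppDisj (T : Finset τ) (items : τ → Finset ι) (X : Finset ι) : ℕ :=
  (T.filter fun t => (X ∩ items t).Nonempty).card

/-- The bond measure (division by zero in `ℚ` yields `0`, matching the convention). -/
def bond (T : Finset τ) (items : τ → Finset ι) (X : Finset ι) : ℚ :=
  (suppConj T items X : ℚ) / (suppDisj T items X : ℚ)

/-- The closure operator associated with the bond measure:
`f_bond(X) = X ∪ {i ∈ ℐ \ X : bond (X ∪ {i}) = bond X}`. -/
def fbond (T : Finset τ) (items : τ → Finset ι) (I : Finset ι) (X : Finset ι) : Finset ι :=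
  X ∪ (I \ X).filter fun i => bond T items (insert i X) = bond T items X

/-! Adding `i` to `X` can only lower the conjunctive support and raise the disjunctive one, so
`bond` is preserved exactly when both supports are. That happens iff `i` is *bonded* to `X`:
every transaction containing `X` contains `i`, and every transaction containing `i` meets `X`.
Being bonded is monotone in `X`, and everything in `f_bond(X)` is bonded to `X`, so `X` and
`f_bond(X)` are contained in, and meet, the same transactions; hence they have the same bonded
items, which gives isotonie and idempotence. -/

theorem eq_and_eq_of_div_eq_div_of_le {K : Type*} [Field K] [LinearOrder K] [IsStrictOrderedRing K]
    {a a' b b' : K} (ha : a' ≤ a) (hb : b ≤ b') (ha0 : 0 < a) (hb0 : 0 < b)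
    (h : a' / b' = a / b) : a' = a ∧ b' = b := by
  rw [div_eq_div_iff (hb0.trans_le hb).ne' hb0.ne'] at h
  have hb' : b' = b := by nlinarith
  subst hb'
  exact ⟨by nlinarith, rfl⟩

theorem Finset.card_filter_eq_card_filter_iff {α : Type*} {s : Finset α} {p q : α → Prop}
    [DecidablePred p] [DecidablePred q] (h : ∀ a ∈ s, p a → q a) :
    #(s.filter p) = #(s.filter q) ↔ ∀ a ∈ s, q a → p a := by
  constructor
  · intro hcard a ha hq
    have hpq := eq_of_subset_of_card_le (monotone_filter_right s h) hcard.ge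
    exact (mem_filter.1 (hpq ▸ mem_filter.2 ⟨ha, hq⟩)).2
  · intro hqp
    rw [filter_congr fun a ha => ⟨h a ha, hqp a ha⟩]

section Supports

variable (T : Finset τ) (items : τ → Finset ι)

theorem suppConj_anti {X X' : Finset ι} (h : X ⊆ X') :
    suppConj T items X' ≤ suppConj T items X :=
  card_le_card <| monotone_filter_right T fun _ _ hX' => h.trans hX'

theorem suppDisj_mono {X X' : Finset ι} (h : X ⊆ X') :
    suppDisj T items X ≤ suppDisj T items X' :=
  card_le_card <| monotone_filter_right T fun _ _ hX => hX.mono (inter_subset_inter_right h)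

theorem suppConj_le_suppDisj {X : Finset ι} (hX : X.Nonempty) :
    suppConj T items X ≤ suppDisj T items X :=
  card_le_card <| monotone_filter_right T fun _ _ hXt => by rwa [inter_eq_left.2 hXt]

theorem suppConj_insert_eq_iff (X : Finset ι) (i : ι) :
    suppConj T items (insert i X) = suppConj T items X ↔
      ∀ t ∈ T, X ⊆ items t → i ∈ items t := by
  rw [suppConj, suppConj, card_filter_eq_card_filter_iff fun _ _ h => (subset_insert i X).trans h]
  simp only [insert_subset_iff]
  exact forall₂_congr fun _ _ => ⟨fun h hX => (h hX).1, fun h hX => ⟨h hX, hX⟩⟩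

theorem suppDisj_insert_eq_iff (X : Finset ι) (i : ι) :
    suppDisj T items (insert i X) = suppDisj T items X ↔
      ∀ t ∈ T, i ∈ items t → (X ∩ items t).Nonempty := by
  rw [suppDisj, suppDisj, eq_comm, card_filter_eq_card_filter_iff fun _ _ h =>
    h.mono (inter_subset_inter_right (subset_insert i X))]
  simp only [Finset.Nonempty, mem_inter, mem_insert, exists_eq_or_imp]
  exact forall₂_congr fun _ _ => ⟨fun h hi => h (Or.inl hi), fun h => (·.elim h id)⟩

end Supports

def Bonded (T : Finset τ) (items : τ → Finset ι) (X : Finset ι) (i : ι) : Prop :=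
  (∀ t ∈ T, X ⊆ items t → i ∈ items t) ∧ ∀ t ∈ T, i ∈ items t → (X ∩ items t).Nonempty

section Bonded

variable {T : Finset τ} {items : τ → Finset ι} {I X X' : Finset ι} {i : ι}

theorem bonded_of_mem (h : i ∈ X) : Bonded T items X i :=
  ⟨fun _ _ hX => hX h, fun _ _ hi => ⟨i, mem_inter.2 ⟨h, hi⟩⟩⟩

theorem Bonded.mono (hXX' : X ⊆ X') (h : Bonded T items X i) : Bonded T items X' i :=
  ⟨fun t ht hX' => h.1 t ht (hXX'.trans hX'),
    fun t ht hi => (h.2 t ht hi).mono (inter_subset_inter_right hXX')⟩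

theorem bond_insert_eq_bond_iff (hX : X.Nonempty) (hc : 0 < suppConj T items X) :
    bond T items (insert i X) = bond T items X ↔ Bonded T items X i := by
  rw [Bonded, ← suppConj_insert_eq_iff, ← suppDisj_insert_eq_iff]
  constructor
  · intro h
    have hd : 0 < suppDisj T items X := hc.trans_le (suppConj_le_suppDisj T items hX)
    exact_mod_cast eq_and_eq_of_div_eq_div_of_le (K := ℚ)
      (by exact_mod_cast suppConj_anti T items (subset_insert i X))
      (by exact_mod_cast suppDisj_mono T items (subset_insert i X))
      (by exact_mod_cast hc) (by exact_mod_cast hd) h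
  · rintro ⟨hconj, hdisj⟩
    rw [bond, bond, hconj, hdisj]

theorem mem_fbond_iff (hX : X.Nonempty) (hc : 0 < suppConj T items X) :
    i ∈ fbond T items I X ↔ i ∈ X ∨ i ∈ I ∧ Bonded T items X i := by
  rw [fbond, mem_union, mem_filter, mem_sdiff, bond_insert_eq_bond_iff hX hc]
  tauto

theorem bonded_of_mem_fbond (hX : X.Nonempty) (hc : 0 < suppConj T items X)
    (h : i ∈ fbond T items I X) : Bonded T items X i := by
  rcases (mem_fbond_iff hX hc).1 h with hi | ⟨-, hi⟩
  exacts [bonded_of_mem hi, hi]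

theorem fbond_subset_items (hX : X.Nonempty) (hc : 0 < suppConj T items X) {t : τ} (ht : t ∈ T)
    (hXt : X ⊆ items t) : fbond T items I X ⊆ items t :=
  fun _ hj => (bonded_of_mem_fbond hX hc hj).1 t ht hXt

theorem suppConj_fbond (hX : X.Nonempty) (hc : 0 < suppConj T items X) :
    suppConj T items (fbond T items I X) = suppConj T items X := by
  rw [suppConj, suppConj]
  exact congrArg card <| filter_congr fun t ht =>
    ⟨subset_union_left.trans, fbond_subset_items hX hc ht⟩

theorem bonded_fbond_iff (hX : X.Nonempty) (hc : 0 < suppConj T items X) :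
    Bonded T items (fbond T items I X) i ↔ Bonded T items X i := by
  refine ⟨fun h => ⟨fun t ht hXt => h.1 t ht (fbond_subset_items hX hc ht hXt),
    fun t ht hi => ?_⟩, Bonded.mono subset_union_left⟩
  obtain ⟨j, hj⟩ := h.2 t ht hi
  rw [mem_inter] at hj
  exact (bonded_of_mem_fbond hX hc hj.1).2 t ht hj.2

end Bonded

theorem stmt19_general (T : Finset τ) (items : τ → Finset ι) (I : Finset ι) :
    (∀ X : Finset ι, X ⊆ I → X ⊆ fbond T items I X) ∧
      (∀ X X' : Finset ι, X ⊆ X' → X' ⊆ I → X.Nonempty → 0 < suppConj T items X' →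
        fbond T items I X ⊆ fbond T items I X') ∧
        ∀ X : Finset ι, X ⊆ I → X.Nonempty → 0 < suppConj T items X →
          fbond T items I (fbond T items I X) = fbond T items I X := by
  refine ⟨fun X _ => subset_union_left, ?isotone, ?idempotent⟩
  case isotone =>
    intro X X' hXX' _ hX hc' i hi
    have hc := hc'.trans_le (suppConj_anti T items hXX')
    rw [mem_fbond_iff hX hc] at hi
    rw [mem_fbond_iff (hX.mono hXX') hc']
    exact hi.imp (@hXX' i) (And.imp_right (Bonded.mono hXX'))
  case idempotent =>
    intro X _ hX hc
    have hY : (fbond T items I X).Nonempty := hX.mono subset_union_left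
    have hcY : 0 < suppConj T items (fbond T items I X) := by rwa [suppConj_fbond hX hc]
    ext i
    rw [mem_fbond_iff hY hcY, bonded_fbond_iff hX hc]
    exact ⟨fun h => h.elim id fun hI => (mem_fbond_iff hX hc).2 (Or.inr hI), Or.inl⟩

theorem stmt19 (T : Finset τ) (items : τ → Finset ι) (I : Finset ι)
    (hitems : ∀ t ∈ T, items t ⊆ I) :
    (∀ X : Finset ι, X ⊆ I → X ⊆ fbond T items I X) ∧
      (∀ X X' : Finset ι, X ⊆ X' → X' ⊆ I → X.Nonempty → 0 < suppConj T items X' →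
        fbond T items I X ⊆ fbond T items I X') ∧
        ∀ X : Finset ι, X ⊆ I → X.Nonempty → 0 < suppConj T items X →
          fbond T items I (fbond T items I X) = fbond T items I X :=
  stmt19_general T items I
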